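/- arXiv:math/0011098 — 8 statements merged into one kernel-verified Lean document; each statement's English description precedes it below -/
import Mathlib

section
/- Suppose t = (t_i)_{i in I} is a solution for e that is not injective (i.e., t_i = t_j for some i ≠ j in I). Then the partition of I induced by t is e-adapted: for every i in I, the sum of e_j over all j in I with t_j = t_i equals 0 in Z/pZ. -/
/-- If `t` is a (non-injective) solution for `e`, then the partition of `I`
induced by `t` (fibers of `t`) is `e`-adapted: for every `i`, the sum of `e j` over all `j`
with `t j = t i` is `0` in `ZMod p`. -/
theorem stmt_0 {p : ℕ} (hp : p.Prime) (k : Type*) [Field k] [CharP k p] [DecidableEq k]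
    (m : ℕ) (hm : 0 < m) (hpm : ¬ p ∣ m)
    (I : Type*) [Fintype I] (hI : Fintype.card I = m + 1)
    (e : I → ZMod p) (he : ∀ i, e i ≠ 0) (hesum : ∑ i, e i = 0)
    (t : I → k)
    (hsol : ∀ ν : ℕ, 1 ≤ ν → ν ≤ m - 1 → ¬ p ∣ ν →
      ∑ i, (ZMod.castHom (dvd_refl p) k (e i)) * t i ^ ν = 0)
    (hnotinj : ¬ Function.Injective t) :
    ∀ i, ∑ j ∈ Finset.univ.filter (fun j => t j = t i), e j = 0 := by
  haveI := Fact.mk hp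
  set f : ZMod p →+* k := ZMod.castHom (dvd_refl p) k with hf
  -- Step 1: the relation holds for all exponents ν ≤ m - 1 (including 0 and multiples of p)
  have key : ∀ ν : ℕ, ν ≤ m - 1 → ∑ i, f (e i) * t i ^ ν = 0 := by
    intro ν
    induction ν using Nat.strong_induction_on with
    | _ ν ih =>
      intro hν
      rcases Nat.eq_zero_or_pos ν with h0 | h1
      · subst h0
        simp only [pow_zero, mul_one, ← map_sum, hesum, map_zero]
      · by_cases hpν : p ∣ ν
        · obtain ⟨ν', rfl⟩ := hpν
          have hp1 : 1 < p := hp.one_lt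
          have hν'pos : 0 < ν' := by
            rcases Nat.eq_zero_or_pos ν' with h | h
            · simp [h] at h1
            · exact h
          have hlt : ν' < p * ν' := by
            calc ν' = 1 * ν' := (one_mul ν').symm
            _ < p * ν' := by exact (Nat.mul_lt_mul_right hν'pos).mpr hp1
          have hν'le : ν' ≤ m - 1 := le_trans (le_of_lt hlt) hν
          have h0 : ∑ i, f (e i) * t i ^ ν' = 0 := ih ν' hlt hν'le
          have : ∑ i, f (e i) * t i ^ (p * ν') = (∑ i, f (e i) * t i ^ ν') ^ p := by
            rw [sum_pow_char]
            refine Finset.sum_congr rfl fun i _ => ?_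
            rw [mul_pow, ← map_pow, ZMod.pow_card, ← pow_mul, Nat.mul_comm]
          rw [this, h0, zero_pow hp.ne_zero]
        · exact hsol ν h1 hν hpν
  -- The image of t and the fiberwise sums
  set S : Finset k := Finset.univ.image t with hS
  have hkey2 : ∀ ν : ℕ, ν ≤ m - 1 →
      ∑ c ∈ S, (∑ j ∈ Finset.univ.filter (fun j => t j = c), f (e j)) * c ^ ν = 0 := by
    intro ν hν
    rw [← key ν hν, ← Finset.sum_fiberwise_of_maps_to
      (fun i _ => Finset.mem_image_of_mem t (Finset.mem_univ i))
      (fun i => f (e i) * t i ^ ν)]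
    refine Finset.sum_congr rfl fun c _ => ?_
    rw [Finset.sum_mul]
    refine Finset.sum_congr rfl fun j hj => ?_
    rw [(Finset.mem_filter.mp hj).2]
  -- Cardinality bound: S.card ≤ m
  have hScard : S.card ≤ m := by
    have h1 : S.card ≤ m + 1 := by
      simpa [hI] using (Finset.card_image_le (s := (Finset.univ : Finset I)) (f := t))
    have h2 : S.card ≠ m + 1 := by
      intro h
      apply hnotinj
      have hinj : Set.InjOn t (Finset.univ : Finset I) := by
        apply Finset.card_image_iff.mp
        rw [h, Finset.card_univ, hI]
      intro a b hab
      exact hinj (by simp) (by simp) hab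
    omega
  -- Enumerate S by Fin r
  set r := S.card with hr
  let eqv : S ≃ Fin r := S.equivFin
  let v : Fin r → k := fun j => ((eqv.symm j : S) : k)
  have hv : Function.Injective v := by
    intro a b h
    have : eqv.symm a = eqv.symm b := Subtype.ext h
    exact eqv.symm.injective this
  set b : Fin r → k := fun j => ∑ i ∈ Finset.univ.filter (fun i => t i = v j), f (e i) with hb
  have hbz : b = 0 := by
    apply Matrix.eq_zero_of_forall_pow_sum_mul_pow_eq_zero hv
    intro ν
    have hν : (ν : ℕ) ≤ m - 1 := by
      have := ν.isLt
      omega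
    have h := hkey2 ν hν
    rw [← h]
    refine Finset.sum_bij (fun j _ => v j) (fun j _ => (eqv.symm j).2)
      (fun a _ c _ hac => hv hac) (fun c hc => ⟨eqv ⟨c, hc⟩, Finset.mem_univ _, by
        simp only [v, Equiv.symm_apply_apply]⟩) (fun j _ => rfl)
  -- Conclude
  intro i
  have hmem : t i ∈ S := Finset.mem_image_of_mem t (Finset.mem_univ i)
  have hji : v (eqv ⟨t i, hmem⟩) = t i := by
    simp only [v, Equiv.symm_apply_apply]
  have hbi : b (eqv ⟨t i, hmem⟩) = 0 := by rw [hbz]; rfl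
  rw [hb] at hbi
  simp only [hji] at hbi
  rw [← map_sum] at hbi
  have hfinj : Function.Injective f := f.injective
  have := hfinj (by rw [hbi, map_zero] : f (∑ j ∈ Finset.univ.filter (fun j => t j = t i), e j) = f 0)
  exact this
end

section
/- For every solution t for e, exactly one of the following two alternatives holds: (i) t is injective; (ii) the partition of I induced by t is e-adapted. (The two cases are mutually exclusive because every e_i is nonzero, so the partition into singletons is never e-adapted; this expresses that the k-points of X_e are the disjoint union of the points of Y_e and of X*_e.) -/
/-- For every solution `t` for `e`, exactly one of the following holds:
(i) `t` is injective; (ii) the partition of `I` induced by `t` is `e`-adapted. -/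
theorem stmt_2 {p : ℕ} (hp : p.Prime) (k : Type*) [Field k] [CharP k p] [DecidableEq k]
    (m : ℕ) (hm : 0 < m) (hpm : ¬ p ∣ m)
    (I : Type*) [Fintype I] (hI : Fintype.card I = m + 1)
    (e : I → ZMod p) (he : ∀ i, e i ≠ 0) (hesum : ∑ i, e i = 0)
    (t : I → k)
    (hsol : ∀ ν : ℕ, 1 ≤ ν → ν ≤ m - 1 → ¬ p ∣ ν →
      ∑ i, (ZMod.castHom (dvd_refl p) k (e i)) * t i ^ ν = 0) :
    Xor' (Function.Injective t)
      (∀ i, ∑ j ∈ Finset.univ.filter (fun j => t j = t i), e j = 0) := by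
  haveI : Fact p.Prime := ⟨hp⟩
  set φ : ZMod p →+* k := ZMod.castHom (dvd_refl p) k with hφ
  have hφinj : Function.Injective φ := φ.injective
  by_cases hinj : Function.Injective t
  · -- case (i): injective, show (ii) fails
    left
    refine ⟨hinj, ?_⟩
    intro hall
    have hne : Nonempty I := by
      rw [← Fintype.card_pos_iff, hI]; omega
    obtain ⟨i⟩ := hne
    have hsing : Finset.univ.filter (fun j => t j = t i) = {i} := by
      ext j
      simp only [Finset.mem_filter, Finset.mem_univ, true_and, Finset.mem_singleton]
      constructor
      · exact fun h => hinj h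
      · rintro rfl; rfl
    have h2 := hall i
    rw [hsing, Finset.sum_singleton] at h2
    exact he i h2
  · -- case (ii): not injective
    right
    refine ⟨?_, hinj⟩
    -- key: all power sums up to m-1 vanish
    have key : ∀ ν : ℕ, ν ≤ m - 1 → ∑ i, φ (e i) * t i ^ ν = 0 := by
      intro ν
      induction ν using Nat.strong_induction_on with
      | _ ν ih =>
        intro hν
        rcases Nat.eq_zero_or_pos ν with h0 | h1
        · subst h0
          simp only [pow_zero, mul_one, ← map_sum, hesum, map_zero]
        · by_cases hpν : p ∣ ν
          · obtain ⟨μ, rfl⟩ := hpν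
            have hp2 : 2 ≤ p := hp.two_le
            rcases Nat.eq_zero_or_pos μ with rfl | hμpos
            · simp at h1
            have hμν : μ < p * μ := by nlinarith
            have hrec := ih μ hμν (le_trans hμν.le hν)
            have : ∑ i, φ (e i) * t i ^ (p * μ) = (∑ i, φ (e i) * t i ^ μ) ^ p := by
              rw [sum_pow_char]
              refine Finset.sum_congr rfl fun i _ => ?_
              rw [mul_pow, ← pow_mul, mul_comm μ p]
              congr 1
              rw [← map_pow, ZMod.pow_card]
            rw [this, hrec, zero_pow hp.ne_zero]
          · exact hsol ν h1 hν hpν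
    -- any polynomial of natDegree ≤ m - 1 gives vanishing weighted sum
    have poly : ∀ q : Polynomial k, q.natDegree ≤ m - 1 →
        ∑ i, φ (e i) * q.eval (t i) = 0 := by
      intro q hq
      have : ∀ i : I, q.eval (t i) =
          ∑ ν ∈ Finset.range (q.natDegree + 1), q.coeff ν * t i ^ ν := by
        intro i
        exact Polynomial.eval_eq_sum_range _
      simp_rw [this, Finset.mul_sum]
      rw [Finset.sum_comm]
      refine Finset.sum_eq_zero fun ν hν => ?_
      have hνm : ν ≤ m - 1 := by
        rw [Finset.mem_range] at hν; omega
      calc ∑ i, φ (e i) * (q.coeff ν * t i ^ ν)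
          = q.coeff ν * ∑ i, φ (e i) * t i ^ ν := by
            rw [Finset.mul_sum]; exact Finset.sum_congr rfl fun i _ => by ring
        _ = 0 := by rw [key ν hνm, mul_zero]
    -- the image of t has at most m elements
    set S : Finset k := Finset.univ.image t with hS
    have hScard : S.card ≤ m := by
      by_contra hc
      push_neg at hc
      have h1 : S.card ≤ m + 1 := by
        calc S.card ≤ (Finset.univ : Finset I).card := Finset.card_image_le
          _ = m + 1 := by rw [Finset.card_univ, hI]
      have h2 : S.card = m + 1 := by omega
      have : Set.InjOn t (Finset.univ : Finset I) := by
        rw [← Finset.card_image_iff]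
        rw [← hS, h2, Finset.card_univ, hI]
      exact hinj fun a b hab => this (Finset.mem_univ a) (Finset.mem_univ b) hab
    intro i
    -- use the Lagrange basis polynomial at t i on nodes S
    have hti : t i ∈ S := Finset.mem_image_of_mem t (Finset.mem_univ i)
    have hinjid : Set.InjOn (id : k → k) S := Function.injective_id.injOn
    set q : Polynomial k := Lagrange.basis S id (t i) with hq
    have hqdeg : q.natDegree ≤ m - 1 := by
      rw [hq, Lagrange.natDegree_basis hinjid hti]
      omega
    have hsum := poly q hqdeg
    have heval : ∀ j : I, q.eval (t j) = if t j = t i then 1 else 0 := by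
      intro j
      by_cases hj : t j = t i
      · rw [hj, if_pos rfl]
        have := Lagrange.eval_basis_self hinjid hti
        simpa using this
      · rw [if_neg hj]
        have htj : t j ∈ S := Finset.mem_image_of_mem t (Finset.mem_univ j)
        have := Lagrange.eval_basis_of_ne (v := id) (fun h => hj (by simpa using h.symm)) htj
        simpa using this
    have : ∑ j ∈ Finset.univ.filter (fun j => t j = t i), φ (e j) = 0 := by
      rw [← hsum]
      rw [Finset.sum_filter]
      refine Finset.sum_congr rfl fun j _ => ?_
      rw [heval j]
      by_cases hj : t j = t i <;> simp [hj]
    rw [← map_sum] at this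
    exact hφinj (by rw [this, map_zero])
end

section
/- Let t be an injective solution for e. Then the vectors (ν · e_i · t_i^{ν−1})_{i in I} of k^I, indexed by the integers ν with 1 ≤ ν ≤ m−1 and p ∤ ν, are linearly independent over k. Equivalently, since there are exactly m − 1 − ⌊m/p⌋ such indices ν, the k-vector space of families x = (x_i)_{i in I} in k^I satisfying sum_{i in I} ν e_i t_i^{ν−1} x_i = 0 for all such ν has dimension ⌊m/p⌋ + 2. (This is the computation of the tangent space showing that the open locus X*_e of points of X_e with pairwise distinct coordinates is regular.) -/
/-!
A vanishing combination `∑ ν, g ν • (ν e_i t_i^(ν-1))_i` says, after cancelling `e_i ≠ 0`, that the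
polynomial `∑ ν, g ν ν X^(ν-1)`, of degree at most `m - 2`, has the `m + 1` distinct roots `t_i`;
so it is zero, and `g ν = 0` because `ν ≠ 0` in `k` when `p ∤ ν`. The dimension then follows from
rank–nullity: there are `(m - 1) - ⌊(m - 1)/p⌋` exponents `ν`, and `⌊(m - 1)/p⌋ = ⌊m/p⌋` as `p ∤ m`.
-/

open Function

open Polynomial in
theorem linearIndependent_pow_of_injective {k ι I : Type*} [Field k] [Fintype I]
    {t : I → k} (ht : Injective t) {d : ι → ℕ} (hd : Injective d)
    (hlt : ∀ ν, d ν < Fintype.card I) :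
    LinearIndependent k (fun ν i => t i ^ d ν) := by
  rw [linearIndependent_iff']
  intro s g hg μ hμ
  set f : k[X] := ∑ ν ∈ s, C (g ν) * X ^ d ν
  have hf : f = 0 := by
    refine eq_zero_of_natDegree_lt_card_of_eval_eq_zero f ht (fun i => ?_) ?_
    · simpa [f, eval_finsetSum] using congrFun hg i
    · have hdeg : f.natDegree ≤ Fintype.card I - 1 :=
        natDegree_sum_le_of_forall_le s _ fun ν _ =>
          (natDegree_C_mul_X_pow_le (g ν) (d ν)).trans (by have := hlt ν; omega)
      have := hlt μ
      omega
  have hcoeff := congrArg (coeff · (d μ)) hf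
  simp only [f, finsetSum_coeff, coeff_C_mul_X_pow, coeff_zero] at hcoeff
  rwa [Finset.sum_eq_single μ (fun ν _ hν => if_neg (hd.ne hν).symm) (absurd hμ), if_pos rfl]
    at hcoeff

theorem linearIndependent_mul_mul_pow {k ι I : Type*} [Field k] [Fintype I]
    {c : ι → k} {a t : I → k} {d : ι → ℕ} (hc : ∀ ν, c ν ≠ 0) (ha : ∀ i, a i ≠ 0)
    (ht : Injective t) (hd : Injective d) (hlt : ∀ ν, d ν < Fintype.card I) :
    LinearIndependent k (fun ν i => c ν * a i * t i ^ d ν) := by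
  let scale : (I → k) ≃ₗ[k] (I → k) :=
    LinearEquiv.piCongrRight fun i => LinearEquiv.smulOfNeZero k k (a i) (ha i)
  have hscaled : (fun ν i => c ν * a i * t i ^ d ν) =
      (fun ν => Units.mk0 (c ν) (hc ν)) • (scale ∘ fun ν i => t i ^ d ν) := by
    ext ν i
    simp [scale, mul_assoc]
  rw [hscaled]
  exact ((linearIndependent_pow_of_injective ht hd hlt).map' scale.toLinearMap
    scale.ker).units_smul _

theorem finrank_iInf_ker_eq_card_sub {k S I : Type*} [Field k] [Fintype I] [Finite S]
    {w : S → I → k} (hw : LinearIndependent k w) :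
    Module.finrank k ↥(⨅ ν, LinearMap.ker
      (∑ i, w ν i • (LinearMap.proj i : (I → k) →ₗ[k] k))) = Fintype.card I - Nat.card S := by
  cases nonempty_fintype S
  have hker : (⨅ ν, LinearMap.ker (∑ i, w ν i • (LinearMap.proj i : (I → k) →ₗ[k] k))) =
      LinearMap.ker (Matrix.of w).mulVecLin := by
    ext x
    simp [Matrix.mulVec, dotProduct, funext_iff]
  have hrank : (Matrix.of w).rank = Fintype.card S := LinearIndependent.rank_matrix hw
  have := LinearMap.finrank_range_add_finrank_ker (Matrix.of w).mulVecLin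
  rw [Module.finrank_fintype_fun_eq_card] at this
  rw [Matrix.rank] at hrank
  rw [hker, Nat.card_eq_fintype_card]
  omega

theorem Nat.card_subtype_not_dvd_Icc (p n : ℕ) :
    Nat.card {ν : ℕ // 1 ≤ ν ∧ ν ≤ n ∧ ¬ p ∣ ν} = n - n / p := by
  have h := Finset.card_filter_add_card_filter_not (s := Finset.Ioc 0 n) (p := (p ∣ ·))
  rw [Nat.Ioc_filter_dvd_card_eq_div, Nat.card_Ioc] at h
  rw [Nat.card_congr (Equiv.subtypeEquivRight (q := (· ∈ (Finset.Ioc 0 n).filter (¬ p ∣ ·)))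
    (by intro ν; simp [Nat.one_le_iff_ne_zero, Nat.pos_iff_ne_zero, and_assoc]))]
  rw [Nat.card_eq_fintype_card, Fintype.card_coe]
  omega

instance Nat.finite_subtype_not_dvd_Icc (p n : ℕ) : Finite {ν : ℕ // 1 ≤ ν ∧ ν ≤ n ∧ ¬ p ∣ ν} :=
  ((Set.finite_Iic n).subset fun _ h => h.2.1).to_subtype

theorem Nat.sub_one_div_of_not_dvd {m p : ℕ} (hpm : ¬ p ∣ m) : (m - 1) / p = m / p := by
  rcases m with _ | m
  · simp
  · rw [Nat.add_sub_cancel, Nat.succ_div, if_neg hpm, add_zero]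

theorem stmt_4_general {p : ℕ} (hp : p.Prime) (k : Type*) [Field k] [CharP k p]
    (m : ℕ) (hm : 0 < m) (hpm : ¬ p ∣ m)
    (I : Type*) [Fintype I] (hI : Fintype.card I = m + 1)
    (e : I → ZMod p) (he : ∀ i, e i ≠ 0)
    (t : I → k) (htinj : Function.Injective t) :
    LinearIndependent k
      (fun (ν : {ν : ℕ // 1 ≤ ν ∧ ν ≤ m - 1 ∧ ¬ p ∣ ν}) =>
        (fun i => (ν.1 : k) * (ZMod.castHom (dvd_refl p) k (e i)) * t i ^ (ν.1 - 1) : I → k)) ∧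
    Module.finrank k
      ↥(⨅ ν : {ν : ℕ // 1 ≤ ν ∧ ν ≤ m - 1 ∧ ¬ p ∣ ν},
        LinearMap.ker (∑ i : I,
          ((ν.1 : k) * (ZMod.castHom (dvd_refl p) k (e i)) * t i ^ (ν.1 - 1)) •
            (LinearMap.proj i : (I → k) →ₗ[k] k))) = m / p + 2 := by
  have : Fact p.Prime := ⟨hp⟩
  have hν : ∀ ν : {ν : ℕ // 1 ≤ ν ∧ ν ≤ m - 1 ∧ ¬ p ∣ ν}, (ν.1 : k) ≠ 0 :=
    fun ν => (CharP.cast_eq_zero_iff k p ν.1).not.2 ν.2.2.2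
  have he' : ∀ i, ZMod.castHom (dvd_refl p) k (e i) ≠ 0 :=
    fun i => (map_ne_zero (ZMod.castHom (dvd_refl p) k)).2 (he i)
  have hd : Injective fun ν : {ν : ℕ // 1 ≤ ν ∧ ν ≤ m - 1 ∧ ¬ p ∣ ν} => ν.1 - 1 :=
    fun ν μ (h : ν.1 - 1 = μ.1 - 1) => Subtype.ext (by have := ν.2.1; have := μ.2.1; omega)
  have hli := linearIndependent_mul_mul_pow hν he' htinj hd
    (fun ν => show ν.1 - 1 < _ by have := ν.2.2.1; omega)
  refine ⟨hli, ?_⟩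
  rw [finrank_iInf_ker_eq_card_sub hli, Nat.card_subtype_not_dvd_Icc, hI,
    Nat.sub_one_div_of_not_dvd hpm]
  have : m / p ≤ m - 1 := Nat.sub_one_div_of_not_dvd hpm ▸ Nat.div_le_self (m - 1) p
  generalize m / p = q at *
  omega

/-- If `t` is an injective solution for `e`, the vectors
`(ν · e_i · t_i^(ν−1))_{i ∈ I}`, indexed by the `ν` with `1 ≤ ν ≤ m−1` and `p ∤ ν`, are
linearly independent over `k`; equivalently, the space of `x ∈ k^I` with
`∑ i, ν e_i t_i^(ν−1) x_i = 0` for all such `ν` has dimension `⌊m/p⌋ + 2`. -/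
theorem stmt_4 {p : ℕ} (hp : p.Prime) (k : Type*) [Field k] [CharP k p]
    (m : ℕ) (hm : 0 < m) (hpm : ¬ p ∣ m)
    (I : Type*) [Fintype I] (hI : Fintype.card I = m + 1)
    (e : I → ZMod p) (he : ∀ i, e i ≠ 0) (hesum : ∑ i, e i = 0)
    (t : I → k) (htinj : Function.Injective t)
    (hsol : ∀ ν : ℕ, 1 ≤ ν → ν ≤ m - 1 → ¬ p ∣ ν →
      ∑ i, (ZMod.castHom (dvd_refl p) k (e i)) * t i ^ ν = 0) :
    LinearIndependent k
      (fun (ν : {ν : ℕ // 1 ≤ ν ∧ ν ≤ m - 1 ∧ ¬ p ∣ ν}) =>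
        (fun i => (ν.1 : k) * (ZMod.castHom (dvd_refl p) k (e i)) * t i ^ (ν.1 - 1) : I → k)) ∧
    Module.finrank k
      ↥(⨅ ν : {ν : ℕ // 1 ≤ ν ∧ ν ≤ m - 1 ∧ ¬ p ∣ ν},
        LinearMap.ker (∑ i : I,
          ((ν.1 : k) * (ZMod.castHom (dvd_refl p) k (e i)) * t i ^ (ν.1 - 1)) •
            (LinearMap.proj i : (I → k) →ₗ[k] k))) = m / p + 2 :=
  stmt_4_general hp k m hm hpm I hI e he t htinj
end

section
/- There exist m+1 pairwise distinct elements t_1, …, t_{m+1} of k such that sum_{i=1}^{m+1} t_i^ν = 0 for every integer ν with 1 ≤ ν ≤ m−1. (This is the statement that, when p = 2, every non-maximal vertex of a Hurwitz tree is realizable.) -/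
/-!
In characteristic `2` an odd `m` is invertible, so `k` contains a primitive `m`-th root of
unity `ζ`. Take `0` together with the `m`-th roots of unity `ζ ^ i`: for `0 < ν < m` the power
sum `∑ i < m, (ζ ^ ν) ^ i` is a geometric sum whose ratio `ζ ^ ν ≠ 1` is an `m`-th root of
unity, hence it vanishes, and `0` contributes nothing.
-/

open Finset

namespace IsPrimitiveRoot

variable {R : Type*} [CommRing R] [IsDomain R] {ζ : R} {n : ℕ}

theorem sum_pow_pow_eq_zero (hζ : IsPrimitiveRoot ζ n) {ν : ℕ} (hν : ν ≠ 0) (hνn : ν < n) :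
    ∑ i ∈ range n, (ζ ^ i) ^ ν = 0 := by
  simp_rw [← pow_mul, mul_comm _ ν, pow_mul]
  refine eq_zero_of_ne_zero_of_mul_left_eq_zero
    (sub_ne_zero_of_ne (hζ.pow_ne_one_of_pos_of_lt hν hνn).symm) ?_
  rw [mul_neg_geom_sum, ← pow_mul, mul_comm, pow_mul, hζ.pow_eq_one, one_pow, sub_self]

theorem exists_injective_sum_pow_eq_zero (hζ : IsPrimitiveRoot ζ n) (hn : n ≠ 0) :
    ∃ t : Fin (n + 1) → R, Function.Injective t ∧
      ∀ ν : ℕ, 1 ≤ ν → ν ≤ n - 1 → ∑ i, t i ^ ν = 0 := by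
  refine ⟨Fin.cons 0 fun i : Fin n ↦ ζ ^ (i : ℕ), Fin.cons_injective_iff.mpr ⟨?_, ?_⟩, ?_⟩
  · rintro ⟨i, hi⟩
    exact pow_ne_zero _ (hζ.ne_zero hn) hi
  · intro i j hij
    exact Fin.ext (hζ.pow_inj i.isLt j.isLt hij)
  · intro ν hν hνn
    rw [Fin.sum_univ_succ]
    simp only [Fin.cons_zero, Fin.cons_succ]
    rw [zero_pow (by omega), zero_add, Fin.sum_univ_eq_sum_range (fun i ↦ (ζ ^ i) ^ ν)]
    exact hζ.sum_pow_pow_eq_zero (by omega) (by omega)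

end IsPrimitiveRoot

theorem stmt_7_general (k : Type*) [Field k] [IsAlgClosed k] [CharP k 2]
    (m : ℕ) (hodd : Odd m) :
    ∃ t : Fin (m + 1) → k, Function.Injective t ∧
      ∀ ν : ℕ, 1 ≤ ν → ν ≤ m - 1 → ∑ i, t i ^ ν = 0 := by
  have : NeZero (m : k) :=
    ⟨by rw [natCast_eq_one_of_odd_of_two_eq_zero hodd CharTwo.two_eq_zero]; exact one_ne_zero⟩
  obtain ⟨ζ, hζ⟩ := HasEnoughRootsOfUnity.exists_primitiveRoot k m
  exact hζ.exists_injective_sum_pow_eq_zero hodd.pos.ne'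

/-- If `k` is an algebraically closed field of characteristic `2` and `m` is an
odd positive integer, there exist `m+1` pairwise distinct elements `t_1, …, t_{m+1}` of `k`
with `∑ i, t i ^ ν = 0` for every `1 ≤ ν ≤ m − 1`. -/
theorem stmt_7 (k : Type*) [Field k] [IsAlgClosed k] [CharP k 2]
    (m : ℕ) (hm : 0 < m) (hodd : Odd m) :
    ∃ t : Fin (m + 1) → k, Function.Injective t ∧
      ∀ ν : ℕ, 1 ≤ ν → ν ≤ m - 1 → ∑ i, t i ^ ν = 0 :=
  stmt_7_general k m hodd
end

section
/- Let r be an integer with 0 < r < p, let f_0 be an element of A with f_0 ∉ πA, and suppose there exists y in L with y^p = π^r · f_0 (as elements of L). Then the quotient ring B/πB is not reduced. (In the paper this shows that in the reduction of a μ_p-torsor whose normalization has integral, hence reduced, special fiber, the Kummer equation y^p = f can always be arranged with f not divisible by π, hence a unit of A.) -/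
/-- If `t = π * u` in `L` with `u` integral over `A` and `π` prime in `A`,
then `π ∣ t` in `A`. -/
lemma key_dvd {A L : Type*} [CommRing A] [IsDomain A] [Field L] [Algebra A L]
    (hinj : Function.Injective (algebraMap A L))
    (π t : A) (hπ : π ≠ 0) (hdom : IsDomain (A ⧸ Ideal.span {π}))
    (u : L) (hu : IsIntegral A u) (ht : algebraMap A L t = algebraMap A L π * u) :
    t ∈ Ideal.span {π} := by
  obtain ⟨q, hqm, hq0⟩ := hu
  set q' := q.scaleRoots π with hq'
  have hq'm : q'.Monic := (Polynomial.monic_scaleRoots_iff π).mpr hqm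
  have hroot : Polynomial.aeval (algebraMap A L π * u) q' = 0 :=
    Polynomial.scaleRoots_aeval_eq_zero hq0
  rw [← ht, Polynomial.aeval_algebraMap_apply_eq_algebraMap_eval] at hroot
  have heval : q'.eval t = 0 := by
    apply hinj
    rw [hroot, map_zero]
  set n := q.natDegree with hn
  have hn0 : n ≠ 0 := by
    intro h
    have : q = 1 := hqm.natDegree_eq_zero.mp h
    rw [this] at hq0
    simp at hq0
  -- map to A ⧸ span {π}
  set φ := Ideal.Quotient.mk (Ideal.span ({π} : Set A)) with hφ
  have hmap : q'.map φ = Polynomial.X ^ n := by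
    ext i
    rw [Polynomial.coeff_map, Polynomial.coeff_X_pow]
    rcases lt_trichotomy i n with h | h | h
    · have : q'.coeff i = q.coeff i * π ^ (n - i) := Polynomial.coeff_scaleRoots q π i
      rw [this, if_neg (Nat.ne_of_lt h)]
      have hni : n - i ≠ 0 := Nat.sub_ne_zero_of_lt h
      have : π ∣ q.coeff i * π ^ (n - i) := by
        exact Dvd.dvd.mul_left (dvd_pow_self π hni) _
      rw [map_mul, map_pow]
      have : φ π = 0 := by
        rw [hφ, Ideal.Quotient.eq_zero_iff_mem]
        exact Ideal.mem_span_singleton_self π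
      rw [this, zero_pow hni, mul_zero]
    · rw [if_pos h, h]
      show φ ((q.scaleRoots π).coeff q.natDegree) = 1
      rw [Polynomial.coeff_scaleRoots_natDegree, hqm.leadingCoeff, map_one]
    · rw [if_neg (Nat.ne_of_gt h)]
      have : q'.coeff i = 0 := by
        apply Polynomial.coeff_eq_zero_of_natDegree_lt
        rw [hq', Polynomial.natDegree_scaleRoots]
        exact h
      rw [this, map_zero]
  haveI := hdom
  have hpow : (φ t) ^ n = 0 := by
    have h0 : (0 : A ⧸ Ideal.span ({π} : Set A)) = Polynomial.eval (φ t) (Polynomial.X ^ n) := by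
      rw [← hmap, Polynomial.eval_map, Polynomial.eval₂_at_apply, heval, map_zero]
    simpa using h0.symm
  have ht0 : φ t = 0 := pow_eq_zero_iff hn0 |>.mp hpow
  rwa [hφ, Ideal.Quotient.eq_zero_iff_mem] at ht0

/-- Let `π` be a prime element of the domain `A`, let `L` be a field extension
of `Frac A` and `B` the integral closure of `A` in `L`. If `0 < r < p`, `f₀ ∈ A ∖ πA` and
some `y ∈ L` satisfies `y^p = π^r · f₀`, then `B/πB` is not reduced. -/
theorem stmt_8 {p : ℕ} (hp : p.Prime)
    (A : Type*) [CommRing A] [IsDomain A] (π : A) (hπ : π ≠ 0)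
    [hquot : IsDomain (A ⧸ Ideal.span {π})]
    (L : Type*) [Field L] [Algebra A L]
    (hinj : Function.Injective (algebraMap A L))
    (r : ℕ) (hr0 : 0 < r) (hrp : r < p)
    (f₀ : A) (hf₀ : f₀ ∉ Ideal.span {π})
    (y : L) (hy : y ^ p = algebraMap A L (π ^ r * f₀)) :
    ¬ IsReduced ((integralClosure A L) ⧸
      Ideal.span {algebraMap A (integralClosure A L) π}) := by
  intro hred
  set B := integralClosure A L with hB
  -- y is integral over A
  have hyint : IsIntegral A y := by
    refine ⟨Polynomial.X ^ p - Polynomial.C (π ^ r * f₀),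
      Polynomial.monic_X_pow_sub_C _ hp.ne_zero, ?_⟩
    simp [hy]
  set yB : B := ⟨y, hyint⟩ with hyB
  set πB : B := algebraMap A B π with hπB
  set I := Ideal.span ({algebraMap A B π} : Set B) with hI
  set φ := Ideal.Quotient.mk I with hφ
  -- yB is nilpotent mod πB
  have hyBp : yB ^ p = algebraMap A B π ^ r * algebraMap A B f₀ := by
    apply Subtype.ext
    push_cast
    rw [hy, map_mul, map_pow]
  have hnil : (φ yB) ^ p = 0 := by
    rw [← map_pow, hyBp, map_mul, map_pow]
    have : φ (algebraMap A B π) = 0 := by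
      rw [hφ, Ideal.Quotient.eq_zero_iff_mem, hI]
      exact Ideal.mem_span_singleton_self _
    rw [this, zero_pow hr0.ne', zero_mul]
  have hyB0 : φ yB = 0 := hred.eq_zero (φ yB) ⟨p, hnil⟩
  have hymem : yB ∈ I := by rwa [hφ, Ideal.Quotient.eq_zero_iff_mem] at hyB0
  obtain ⟨w, hw⟩ := Ideal.mem_span_singleton'.mp (hI ▸ hymem)
  -- In L: y = w * π
  have hyL : y = (w : L) * algebraMap A L π := by
    have := congrArg (Subtype.val) hw
    simpa using this.symm
  -- Derive f₀ = π^(p-r) * w^p in L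
  have hπL : algebraMap A L π ≠ 0 := fun h => hπ (hinj (by rw [h, map_zero]))
  have hkey : algebraMap A L f₀ = algebraMap A L π ^ (p - r) * (w : L) ^ p := by
    have h1 : (w : L) ^ p * algebraMap A L π ^ p
        = algebraMap A L π ^ r * algebraMap A L f₀ := by
      rw [← mul_pow, ← hyL, hy, map_mul, map_pow]
    have h2 : algebraMap A L π ^ p
        = algebraMap A L π ^ r * algebraMap A L π ^ (p - r) := by
      rw [← pow_add, Nat.add_sub_cancel' hrp.le]
    rw [h2] at h1
    have h3 : algebraMap A L π ^ r * (algebraMap A L π ^ (p - r) * (w : L) ^ p)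
        = algebraMap A L π ^ r * algebraMap A L f₀ := by rw [← h1]; ring
    exact (mul_left_cancel₀ (pow_ne_zero r hπL) h3).symm
  -- the integral element u with f₀ = π * u
  set uB : B := algebraMap A B (π ^ (p - r - 1)) * w ^ p with huB
  have hprs : p - r = (p - r - 1) + 1 := by omega
  have hfeq : algebraMap A L f₀ = algebraMap A L π * (uB : L) := by
    rw [hkey, hprs, pow_succ]
    have : ((uB : L)) = algebraMap A L (π ^ (p - r - 1)) * (w : L) ^ p := by
      rw [huB]; push_cast; rfl
    rw [this, map_pow]
    ring
  have : f₀ ∈ Ideal.span ({π} : Set A) :=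
    key_dvd hinj π f₀ hπ hquot (uB : L) uB.2 hfeq
  exact hf₀ this
end

section
/- Let f be a unit of A whose image f̄ in A/πA is not a p-th power in the fraction field of A/πA. Then the ring A[y]/(y^p − f) is an integrally closed integral domain; consequently it is the integral closure of A in the field Frac(A)[y]/(y^p − f). (This is the multiplicative-reduction case of the reduction of μ_p-torsors: the torsor extends to a μ_p-torsor over Spec A.) -/
/-!
Put `B = A[y]/(y^p - f)`, `K = Frac A` and `L = K[y]/(y^p - f)`. As `f̄` has no `p`-th root in
`Frac(A/π)`, neither has `f` in `K` (a root would lie in the normal ring `A`), so `y^p - f` is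
irreducible over `K` and `y^p - f̄` over `Frac(A/π)`. Hence `B` embeds in the field `L`, which is
its fraction field, and `B/πB = (A/π)[y]/(y^p - f̄)` is a domain: `π` is prime in `B`.

The discriminant of `1, y, …, y^(p-1)` is `± p^p f^(p-1)`, a unit of `A` times a power of `π`,
since `f` is a unit and `p = u πⁿ` in `R`. So if `x ∈ L` is integral over `B`, then
`πᴺ x ∈ A[y] = B` for some `N`. Finally `π` can be cancelled one factor at a time: if `π x = b` with
`x` integral of degree `m`, then `π ∣ bᵐ`, hence `π ∣ b`.
-/

open Polynomial

theorem IsIntegrallyClosed.pow_ne_algebraMap_of_map {A K S : Type*} [CommRing A]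
    [IsIntegrallyClosed A] [Field K] [Algebra A K] [IsFractionRing A K] [CommRing S] {n : ℕ}
    (hn : 0 < n) (φ : A →+* S) {f : A} (hf : ∀ c : S, c ^ n ≠ φ f) (b : K) :
    b ^ n ≠ algebraMap A K f := by
  intro hb
  obtain ⟨a, rfl⟩ :=
    exists_algebraMap_eq_of_isIntegral_pow (R := A) hn (hb ▸ isIntegral_algebraMap)
  have ha : a ^ n = f := IsFractionRing.injective A K (by rwa [map_pow])
  exact hf (φ a) (by rw [← map_pow, ha])

theorem IsIntegral.exists_algebraMap_eq_of_prime_pow_mul {B L : Type*} [CommRing B] [CommRing L]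
    [IsDomain L] [Algebra B L] [FaithfulSMul B L] {π : B} (hπ : Prime π) {x : L}
    (hx : IsIntegral B x) (N : ℕ) {b : B} (h : algebraMap B L π ^ N * x = algebraMap B L b) :
    ∃ c, algebraMap B L c = x := by
  induction N generalizing b with
  | zero => exact ⟨b, by simpa using h.symm⟩
  | succ N ih =>
    have hinj := FaithfulSMul.algebraMap_injective B L
    obtain ⟨Q, hQ, hQz⟩ := ((isIntegral_algebraMap (x := π)).pow N).mul hx
    have hdvd : π ∣ b ^ Q.natDegree :=
      dvd_pow_natDegree_of_eval₂_eq_zero hinj hQ π b _ hQz (by rw [← h, pow_succ']; ring)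
    obtain ⟨c, rfl⟩ := hπ.dvd_of_dvd_pow hdvd
    have hπ0 : algebraMap B L π ≠ 0 := (map_ne_zero_iff _ hinj).mpr hπ.ne_zero
    refine ih (b := c) (mul_left_cancel₀ hπ0 ?_)
    rw [← map_mul, ← h, pow_succ']
    ring

theorem IsIntegrallyClosed.of_prime_of_discr_dvd_pow {A B K L : Type*} [CommRing A]
    [IsIntegrallyClosed A] [Field K] [Algebra A K] [IsFractionRing A K] [CommRing B] [Field L]
    [Algebra A B] [Algebra.IsIntegral A B] [Algebra B L] [IsFractionRing B L] [Algebra A L]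
    [IsScalarTower A B L] [Algebra K L] [IsScalarTower A K L] [Algebra.IsSeparable K L]
    (pb : PowerBasis K L) (hgen : pb.gen ∈ Set.range (algebraMap B L)) {π d : A} {N : ℕ}
    (hπ : Prime (algebraMap A B π)) (hd : algebraMap A K d = Algebra.discr K pb.basis)
    (hdvd : d ∣ π ^ N) : IsIntegrallyClosed B := by
  have : FaithfulSMul B L :=
    (faithfulSMul_iff_algebraMap_injective B L).mpr (IsFractionRing.injective B L)
  have := pb.finite
  rw [isIntegrallyClosed_iff L]
  intro x hx
  obtain ⟨b₀, hb₀⟩ := hgen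
  have hgenA : IsIntegral A pb.gen := hb₀ ▸ (Algebra.IsIntegral.isIntegral b₀).algebraMap
  have hle : Algebra.adjoin A {pb.gen} ≤ (IsScalarTower.toAlgHom A B L).range :=
    Algebra.adjoin_le (by simpa using ⟨b₀, hb₀⟩)
  obtain ⟨b, hb⟩ :=
    hle (Algebra.discr_mul_isIntegral_mem_adjoin K hgenA (isIntegral_trans x hx))
  obtain ⟨w, hw⟩ := hdvd
  refine hx.exists_algebraMap_eq_of_prime_pow_mul hπ N (b := algebraMap A B w * b) ?_
  calc algebraMap B L (algebraMap A B π) ^ N * x = algebraMap A L (π ^ N) * x := by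
        rw [← IsScalarTower.algebraMap_apply, map_pow]
    _ = algebraMap A L w * (Algebra.discr K pb.basis • x) := by
        rw [hw, Algebra.smul_def, ← hd, ← IsScalarTower.algebraMap_apply, map_mul]; ring
    _ = _ := by rw [← hb, map_mul, ← IsScalarTower.algebraMap_apply]; rfl

theorem AdjoinRoot.discr_powerBasis_of_eq_X_pow_sub_C {K : Type*} [Field K] {q : K[X]}
    [Fact (Irreducible q)] [Algebra.IsSeparable K (AdjoinRoot q)] {n : ℕ} {a : K} (hn : n ≠ 0)
    (hq : q = X ^ n - C a) :
    Algebra.discr K (powerBasis (Fact.out : Irreducible q).ne_zero).basis =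
      (-1) ^ (n * (n - 1) / 2) * (n ^ n * ((-1) ^ (n + 1) * a) ^ (n - 1)) := by
  set pb := powerBasis (Fact.out : Irreducible q).ne_zero
  have := pb.finite
  have hmin : minpoly K pb.gen = q := by
    rw [powerBasis_gen, minpoly_root (Fact.out : Irreducible q).ne_zero, hq,
      (monic_X_pow_sub_C a hn).leadingCoeff, inv_one, C_1, mul_one]
  have hdim : pb.dim = n := by rw [powerBasis_dim, hq, natDegree_X_pow_sub_C]
  have hnorm : Algebra.norm K pb.gen = (-1) ^ (n + 1) * a := by
    rw [Algebra.PowerBasis.norm_gen_eq_coeff_zero_minpoly, hmin, hdim, hq]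
    simp only [coeff_sub, coeff_X_pow, Ne.symm hn, ↓reduceIte, coeff_C_zero, zero_sub, mul_neg]
    ring
  have hder : derivative q = C (n : K) * X ^ (n - 1) := by
    rw [hq, derivative_sub, derivative_C, sub_zero, derivative_X_pow]
  rw [Algebra.discr_powerBasis_eq_norm, pb.finrank, hdim, hmin, hder, map_mul, aeval_C, map_pow,
    aeval_X, map_mul, map_pow, Algebra.norm_algebraMap, pb.finrank, hdim, hnorm]

namespace AdjoinRoot

theorem map_mk {R S : Type*} [CommRing R] [CommRing S] (f : R →+* S) (p : R[X]) (q : S[X])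
    (h : q ∣ p.map f) (P : R[X]) : map f p q h (mk p P) = mk q (P.map f) := by
  rw [map, lift_mk, ← eval₂_map, ← algebraMap_eq, ← aeval_def, aeval_eq]

variable {A : Type*} [CommRing A] [IsDomain A] (K : Type*) [Field K] [Algebra A K]
  [IsFractionRing A K] {g : A[X]}

theorem map_algebraMap_injective (hg : g.Monic) :
    Function.Injective (map (algebraMap A K) g (g.map (algebraMap A K)) dvd_rfl) := by
  rw [injective_iff_map_eq_zero]
  intro b hb
  obtain ⟨P, rfl⟩ := mk_surjective b
  rw [← mk_leftInverse hg (mk g P), modByMonicHom_mk] at hb ⊢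
  rw [map_mk, mk_eq_zero] at hb
  have hinj := IsFractionRing.injective A K
  have hdeg : (P %ₘ g).map (algebraMap A K) = 0 := eq_zero_of_dvd_of_degree_lt hb <| by
    rw [degree_map_eq_of_injective hinj, degree_map_eq_of_injective hinj]
    exact degree_modByMonic_lt P hg
  rw [Polynomial.map_eq_zero_iff hinj] at hdeg
  rw [hdeg, map_zero]

theorem isDomain_of_irreducible_map (hg : g.Monic) (hirr : Irreducible (g.map (algebraMap A K))) :
    IsDomain (AdjoinRoot g) :=
  have : Fact (Irreducible (g.map (algebraMap A K))) := ⟨hirr⟩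
  (map_algebraMap_injective K hg).isDomain _

theorem prime_of_irreducible_map_quotient (hg : g.Monic) {a : A} (ha : a ≠ 0)
    [IsDomain (A ⧸ Ideal.span {a})]
    (hirr : Irreducible ((g.map (Ideal.Quotient.mk (Ideal.span {a}))).map
      (algebraMap _ (FractionRing (A ⧸ Ideal.span {a}))))) :
    Prime (of g a) := by
  have hdeg : g.degree ≠ 0 := fun h => by
    simp [hg.degree_le_zero_iff_eq_one.mp h.le] at hirr
  have hdom := isDomain_of_irreducible_map _ (hg.map _) hirr
  have : IsDomain ((A ⧸ Ideal.span {a})[X] ⧸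
      Ideal.span {g.map (Ideal.Quotient.mk (Ideal.span {a}))}) := hdom
  have ha' : of g a ≠ 0 := (map_ne_zero_iff _ (of.injective_of_degree_ne_zero hdeg)).mpr ha
  rw [← Ideal.span_singleton_prime ha', ← Ideal.Quotient.isDomain_iff_prime,
    ← Set.image_singleton, ← Ideal.map_span]
  exact (quotAdjoinRootEquivQuotPolynomialQuot _ g).toMulEquiv.isDomain _

noncomputable abbrev algebraMapFractionRing (g : A[X]) :
    Algebra (AdjoinRoot g) (AdjoinRoot (g.map (algebraMap A K))) :=
  (map (algebraMap A K) g (g.map (algebraMap A K)) dvd_rfl).toAlgebra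

attribute [local instance] algebraMapFractionRing

instance : IsScalarTower A (AdjoinRoot g) (AdjoinRoot (g.map (algebraMap A K))) :=
  IsScalarTower.of_algebraMap_eq fun a => (map_of _ _ _ _ a).symm

theorem isFractionRing [Fact (Irreducible (g.map (algebraMap A K)))] (hg : g.Monic) :
    IsFractionRing (AdjoinRoot g) (AdjoinRoot (g.map (algebraMap A K))) := by
  have : FaithfulSMul (AdjoinRoot g) (AdjoinRoot (g.map (algebraMap A K))) :=
    (faithfulSMul_iff_algebraMap_injective _ _).mpr (map_algebraMap_injective K hg)
  refine .of_field (AdjoinRoot g) _ fun z => ?_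
  obtain ⟨Q, rfl⟩ := mk_surjective z
  obtain ⟨b, hb, hbQ⟩ := IsLocalization.integerNormalization_spec (nonZeroDivisors A) Q
  refine ⟨mk g (IsLocalization.integerNormalization (nonZeroDivisors A) Q), of g b, ?_⟩
  have hb0 : of (g.map (algebraMap A K)) (algebraMap A K b) ≠ 0 :=
    (map_ne_zero_iff _ coe_injective').mpr
      (IsFractionRing.to_map_ne_zero_of_mem_nonZeroDivisors hb)
  rw [RingHom.algebraMap_toAlgebra, map_of, map_mk, eq_div_iff hb0, hbQ, Algebra.smul_def,
    Polynomial.algebraMap_apply, map_mul, mk_C, mul_comm]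

theorem isIntegrallyClosed_of_prime_of_discr_dvd_pow [IsIntegrallyClosed A]
    [Fact (Irreducible (g.map (algebraMap A K)))]
    [Algebra.IsSeparable K (AdjoinRoot (g.map (algebraMap A K)))] (hg : g.Monic) {π d : A} {N : ℕ}
    (hπ : Prime (of g π))
    (hd : algebraMap A K d =
      Algebra.discr K (powerBasis (Fact.out : Irreducible (g.map (algebraMap A K))).ne_zero).basis)
    (hdvd : d ∣ π ^ N) : IsIntegrallyClosed (AdjoinRoot g) :=
  have := isFractionRing K hg
  have := hg.finite_adjoinRoot
  IsIntegrallyClosed.of_prime_of_discr_dvd_pow _ ⟨root g, map_root _ _ _ _⟩ hπ hd hdvd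

theorem isIntegrallyClosed_X_pow_sub_C_of_prime [IsIntegrallyClosed A] {n : ℕ} (hn : n ≠ 0)
    {f : A} (hf : IsUnit f) [Fact (Irreducible ((X ^ n - C f).map (algebraMap A K)))]
    [Algebra.IsSeparable K (AdjoinRoot ((X ^ n - C f).map (algebraMap A K)))] {π : A} {N : ℕ}
    (hπ : Prime (of (X ^ n - C f) π)) (hnπ : (n : A) ∣ π ^ N) :
    IsIntegrallyClosed (AdjoinRoot (X ^ n - C f)) := by
  set d : A := (-1) ^ (n * (n - 1) / 2) * (n ^ n * ((-1) ^ (n + 1) * f) ^ (n - 1))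
  have hd : algebraMap A K d = Algebra.discr K (powerBasis
      (Fact.out : Irreducible ((X ^ n - C f).map (algebraMap A K))).ne_zero).basis := by
    rw [discr_powerBasis_of_eq_X_pow_sub_C hn (a := algebraMap A K f) (by simp)]
    simp [d]
  have hdvd : d ∣ π ^ (N * n) := by
    have hunit : IsUnit ((-1) ^ (n * (n - 1) / 2) * ((-1) ^ (n + 1) * f) ^ (n - 1) : A) :=
      (isUnit_neg_one.pow _).mul (((isUnit_neg_one.pow _).mul hf).pow _)
    rw [show d = n ^ n * ((-1) ^ (n * (n - 1) / 2) * ((-1) ^ (n + 1) * f) ^ (n - 1)) by ring,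
      hunit.mul_right_dvd, pow_mul]
    exact pow_dvd_pow_of_dvd hnπ n
  exact isIntegrallyClosed_of_prime_of_discr_dvd_pow K (monic_X_pow_sub_C f hn) hπ hd hdvd

end AdjoinRoot

theorem stmt_9_general {p : ℕ} (hp : p.Prime)
    (R : Type*) [CommRing R] [IsDomain R] [IsDiscreteValuationRing R]
    [CharZero (FractionRing R)]
    (π : R) (hπ : Irreducible π)
    (A : Type*) [CommRing A] [IsDomain A] [UniqueFactorizationMonoid A]
    [Algebra R A] [Module.Flat R A]
    [IsDomain (A ⧸ Ideal.span {algebraMap R A π})]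
    (f : A) (hf : IsUnit f)
    (hfbar : ¬ ∃ g : FractionRing (A ⧸ Ideal.span {algebraMap R A π}),
      g ^ p = algebraMap (A ⧸ Ideal.span {algebraMap R A π}) _
        (Ideal.Quotient.mk (Ideal.span {algebraMap R A π}) f)) :
    IsDomain (AdjoinRoot ((Polynomial.X : Polynomial A) ^ p - Polynomial.C f)) ∧
    IsIntegrallyClosed (AdjoinRoot ((Polynomial.X : Polynomial A) ^ p - Polynomial.C f)) ∧
    IsIntegralClosure (AdjoinRoot ((Polynomial.X : Polynomial A) ^ p - Polynomial.C f)) A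
      (FractionRing (AdjoinRoot ((Polynomial.X : Polynomial A) ^ p - Polynomial.C f))) := by
  set K := FractionRing A
  have hp0 := hp.ne_zero
  have hg : (X ^ p - C f : A[X]).Monic := monic_X_pow_sub_C f hp0
  have hRA : Function.Injective (algebraMap R A) :=
    Module.isTorsionFree_iff_algebraMap_injective.mp inferInstance
  have : CharZero R := (algebraMap R (FractionRing R)).charZero
  have : CharZero A := charZero_of_injective_algebraMap hRA
  have : CharZero K := charZero_of_injective_algebraMap (IsFractionRing.injective A K)
  have hirr : Irreducible ((X ^ p - C f : A[X]).map (algebraMap A K)) := by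
    simp only [Polynomial.map_sub, Polynomial.map_pow, map_X, map_C]
    exact X_pow_sub_C_irreducible_of_prime hp <| IsIntegrallyClosed.pow_ne_algebraMap_of_map
      hp.pos ((algebraMap _ _).comp (Ideal.Quotient.mk _)) fun c hc => hfbar ⟨c, hc⟩
  have : Fact (Irreducible ((X ^ p - C f : A[X]).map (algebraMap A K))) := ⟨hirr⟩
  have := (hg.map (algebraMap A K)).finite_adjoinRoot
  have hprime : Prime (AdjoinRoot.of (X ^ p - C f) (algebraMap R A π)) := by
    refine AdjoinRoot.prime_of_irreducible_map_quotient hg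
      ((map_ne_zero_iff _ hRA).mpr hπ.ne_zero) ?_
    simp only [Polynomial.map_sub, Polynomial.map_pow, map_X, map_C]
    exact X_pow_sub_C_irreducible_of_prime hp fun c hc => hfbar ⟨c, hc⟩
  obtain ⟨n, u, hpu⟩ := IsDiscreteValuationRing.eq_unit_mul_pow_irreducible
    (Nat.cast_ne_zero.mpr hp0 : (p : R) ≠ 0) hπ
  have hp_dvd : (p : A) ∣ algebraMap R A π ^ n := by
    simpa using
      map_dvd (algebraMap R A) (hpu ▸ Units.mul_left_dvd.mpr dvd_rfl : (p : R) ∣ π ^ n)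
  have := hg.finite_adjoinRoot
  have := AdjoinRoot.isIntegrallyClosed_X_pow_sub_C_of_prime K hp0 hf hprime hp_dvd
  exact ⟨AdjoinRoot.isDomain_of_irreducible_map K hg hirr, this, inferInstance⟩

/-- multiplicative reduction: if `f` is a unit of `A` whose image in `A/πA` is
not a `p`-th power in `Frac(A/πA)`, then `A[y]/(y^p − f)` is an integrally closed domain,
and is hence the integral closure of `A` in its fraction field `Frac(A)[y]/(y^p − f)`. -/
theorem stmt_9 {p : ℕ} (hp : p.Prime)
    (R : Type*) [CommRing R] [IsDomain R] [IsDiscreteValuationRing R]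
    [IsAdicComplete (IsLocalRing.maximalIdeal R) R]
    [CharZero (FractionRing R)]
    [IsAlgClosed (IsLocalRing.ResidueField R)] [CharP (IsLocalRing.ResidueField R) p]
    (π : R) (hπ : Irreducible π)
    (A : Type*) [CommRing A] [IsDomain A] [UniqueFactorizationMonoid A]
    [Algebra R A] [Module.Flat R A]
    [IsAdicComplete (Ideal.span {algebraMap R A π}) A]
    [IsDomain (A ⧸ Ideal.span {algebraMap R A π})]
    (f : A) (hf : IsUnit f)
    (hfbar : ¬ ∃ g : FractionRing (A ⧸ Ideal.span {algebraMap R A π}),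
      g ^ p = algebraMap (A ⧸ Ideal.span {algebraMap R A π}) _
        (Ideal.Quotient.mk (Ideal.span {algebraMap R A π}) f)) :
    IsDomain (AdjoinRoot ((Polynomial.X : Polynomial A) ^ p - Polynomial.C f)) ∧
    IsIntegrallyClosed (AdjoinRoot ((Polynomial.X : Polynomial A) ^ p - Polynomial.C f)) ∧
    IsIntegralClosure (AdjoinRoot ((Polynomial.X : Polynomial A) ^ p - Polynomial.C f)) A
      (FractionRing (AdjoinRoot ((Polynomial.X : Polynomial A) ^ p - Polynomial.C f))) :=
  stmt_9_general hp R π hπ A f hf hfbar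
end

section
/- Let f be a unit of A such that the polynomial X^p − f is irreducible over Frac(A); let L := Frac(A)[X]/(X^p − f), let B be the integral closure of A in L, and assume that B/πB is an integral domain. If the image of f in A/πA is a p-th power in A/πA, then there exist a unit g of A, an integer n with 0 < n ≤ v_K(λ), and h ∈ A such that f = g^p · (1 + π^{pn} h), and moreover either n = v_K(λ), or the image of h in A/πA is not a p-th power in A/πA. (This is the additive/étale normal form in the classification of the reduction of μ_p-torsors: the torsor extends to a torsor under the group scheme H_n.) -/
/-!
Write `f = g^p (1 + π^m h)` and push `m` up. Once `m ≥ p·v_K(λ)` we are done with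
`n = v_K(λ)`. If `m = pn` and `h ≡ a^p` modulo `π`, replacing `g` by `g (1 + πⁿ a)` raises `m`,
since `λ^(p-1) ∣ p` gives `(1 + πⁿ a)^p ≡ 1 + π^(pn) a^p` modulo `π^(pn+1)`. The case
`p ∤ m < p·v_K(λ)` is impossible unless `π ∣ h`: for a root `θ` of `X^p - f`, `y = θ / g` is
integral with `y^p = 1 + π^m h`; writing `y = 1 + π^j w` and comparing `p`-th powers, primality
of `π` in `B` forces `π ∣ w` for every `j ≤ m / p`, and then `π^(m+1) ∣ π^m h`.
-/

theorem mul_le_sub_one_mul_add {p v j : ℕ} (h : j ≤ v) : j * p ≤ (p - 1) * v + j := by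
  rcases p with _ | p
  · simp
  · rw [Nat.add_sub_cancel]; nlinarith

theorem mul_add_one_le_sub_one_mul_add {p v j : ℕ} (hp : 2 ≤ p) (h : j < v) :
    j * p + 1 ≤ (p - 1) * v + j := by
  have := mul_le_sub_one_mul_add (p := p) (Nat.succ_le_of_lt h)
  rw [Nat.succ_mul] at this
  omega

section Ring

variable {A : Type*} [CommRing A] {p v : ℕ}

theorem dvd_one_add_pow_sub_one_sub_pow (hp : p.Prime) {a x : A} (h : a ∣ p * x) :
    a ∣ (1 + x) ^ p - 1 - x ^ p := by
  obtain ⟨r, hr⟩ := exists_add_pow_prime_eq hp (1 : A) x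
  rw [hr, one_pow, mul_one, show 1 + x ^ p + p * x * r - 1 - x ^ p = p * x * r by ring]
  exact h.mul_right r

theorem pow_dvd_one_add_pow_sub_one_sub_pow (hp : p.Prime) {π : A}
    (hpd : π ^ ((p - 1) * v) ∣ (p : A)) {N j : ℕ} (hN : N ≤ (p - 1) * v + j) (w : A) :
    π ^ N ∣ (1 + π ^ j * w) ^ p - 1 - π ^ (j * p) * w ^ p := by
  rw [pow_mul, ← mul_pow]
  refine dvd_one_add_pow_sub_one_sub_pow hp <| (pow_dvd_pow π hN).trans ?_
  rw [pow_add, ← mul_assoc]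
  exact (mul_dvd_mul hpd dvd_rfl).mul_right w

theorem exists_eq_mul_one_add_of_dvd_sub {u c x : A} (hu : IsUnit u) (h : c ∣ x - u) :
    ∃ e, x = u * (1 + c * e) := by
  obtain ⟨t, ht⟩ := h
  exact ⟨↑hu.unit⁻¹ * t, by linear_combination ht - c * t * hu.mul_val_inv⟩

theorem exists_dvd_sub_pow_of_mk_eq_pow {π x : A}
    (h : ∃ c : A ⧸ Ideal.span {π}, c ^ p = Ideal.Quotient.mk _ x) : ∃ a, π ∣ x - a ^ p := by
  obtain ⟨c, hc⟩ := h
  obtain ⟨a, rfl⟩ := Ideal.Quotient.mk_surjective c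
  exact ⟨a, Ideal.mem_span_singleton.mp (Ideal.Quotient.eq.mp (by rw [← hc, map_pow]))⟩

theorem exists_pow_mul_one_add_of_mk_eq_pow (hp : p ≠ 0) {π f : A}
    (hjac : Ideal.span {π} ≤ Ideal.jacobson ⊥) (hf : IsUnit f)
    (h : ∃ c : A ⧸ Ideal.span {π}, c ^ p = Ideal.Quotient.mk _ f) :
    ∃ g e, IsUnit g ∧ f = g ^ p * (1 + π * e) := by
  obtain ⟨a, ha⟩ := exists_dvd_sub_pow_of_mk_eq_pow h
  have := isLocalHom_of_le_jacobson_bot _ hjac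
  have hau : IsUnit a := by
    refine (isUnit_pow_iff hp).mp (IsUnit.of_map (Ideal.Quotient.mk (Ideal.span {π})) _ ?_)
    rw [← Ideal.Quotient.eq.mpr (Ideal.mem_span_singleton.mpr ha)]
    exact hf.map _
  obtain ⟨e, he⟩ := exists_eq_mul_one_add_of_dvd_sub (hau.pow p) ha
  exact ⟨a, e, hau, he⟩

end Ring

section Domain

variable {B : Type*} [CommRing B] [IsDomain B] {p v m : ℕ} {π y h : B}

theorem exists_eq_one_add_pow_mul_of_pow_eq (hp : p.Prime) (hπ : Prime π)
    (hpd : π ^ ((p - 1) * v) ∣ (p : B)) (hy : y ^ p = 1 + π ^ m * h) (hmv : m < p * v)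
    (hpm : ¬ p ∣ m) : ∀ j ≤ m / p + 1, ∃ w, y = 1 + π ^ j * w := by
  have hmv' : m / p < v := (Nat.div_lt_iff_lt_mul hp.pos).mpr (by rwa [mul_comm] at hmv)
  intro j hj
  induction j with
  | zero => exact ⟨y - 1, by ring⟩
  | succ j ih =>
    obtain ⟨w, rfl⟩ := ih (by omega)
    have hjm : j * p + 1 ≤ m := by
      have : j * p ≤ m :=
        (Nat.mul_le_mul_right p (by omega : j ≤ m / p)).trans (Nat.div_mul_le_self m p)
      have : j * p ≠ m := fun e => hpm ⟨j, by rw [← e, mul_comm]⟩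
      omega
    have hy' : π ^ (j * p + 1) ∣ (1 + π ^ j * w) ^ p - 1 := by
      rw [hy, add_sub_cancel_left]
      exact (pow_dvd_pow π hjm).mul_right h
    have hdvd : π ^ (j * p) * π ∣ π ^ (j * p) * w ^ p := by
      rw [← pow_succ]
      exact (dvd_sub_right hy').mp <| pow_dvd_one_add_pow_sub_one_sub_pow hp hpd
        (mul_add_one_le_sub_one_mul_add hp.two_le (by omega)) w
    obtain ⟨w', rfl⟩ :=
      hπ.dvd_of_dvd_pow ((mul_dvd_mul_iff_left (pow_ne_zero _ hπ.ne_zero)).mp hdvd)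
    exact ⟨w', by ring⟩

theorem dvd_of_pow_eq_one_add_pow_mul (hp : p.Prime) (hπ : Prime π)
    (hpd : π ^ ((p - 1) * v) ∣ (p : B)) (hy : y ^ p = 1 + π ^ m * h) (hmv : m < p * v)
    (hpm : ¬ p ∣ m) : π ∣ h := by
  set J := m / p + 1
  obtain ⟨w, rfl⟩ := exists_eq_one_add_pow_mul_of_pow_eq hp hπ hpd hy hmv hpm J le_rfl
  have hmJ : m + 1 ≤ J * p := by
    have := Nat.lt_div_mul_add (a := m) hp.pos
    simp only [J, add_mul, one_mul]; omega
  have hJv : J ≤ v := (Nat.div_lt_iff_lt_mul hp.pos).mpr (by rwa [mul_comm] at hmv)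
  have hdvd : π ^ m * π ∣ π ^ m * h := by
    rw [← pow_succ, ← add_sub_cancel_left 1 (π ^ m * h), ← hy]
    simpa using dvd_add
      (pow_dvd_one_add_pow_sub_one_sub_pow hp hpd (hmJ.trans (mul_le_sub_one_mul_add hJv)) w)
      ((pow_dvd_pow π hmJ).mul_right (w ^ p))
  exact (mul_dvd_mul_iff_left (pow_ne_zero _ hπ.ne_zero)).mp hdvd

end Domain

section NormalForm

variable {A : Type*} [CommRing A] {p v : ℕ} {π : A}

theorem exists_pow_mul_one_add_pow_succ (hp : p.Prime) (hjac : π ∈ Ideal.jacobson ⊥)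
    (hpd : π ^ ((p - 1) * v) ∣ (p : A)) {n : ℕ} (hn : 0 < n) (hnv : n < v) {a e : A}
    (he : π ∣ e - a ^ p) :
    ∃ u e', IsUnit u ∧ 1 + π ^ (p * n) * e = u ^ p * (1 + π ^ (p * n + 1) * e') := by
  have hu : IsUnit (1 + π ^ n * a) := by
    simpa [add_comm] using Ideal.mem_jacobson_bot.mp
      (Ideal.mul_mem_right a _ (Ideal.pow_mem_of_mem _ hjac n hn)) 1
  have h1 := pow_dvd_one_add_pow_sub_one_sub_pow hp hpd (N := p * n + 1) (j := n)
    (by rw [mul_comm]; exact mul_add_one_le_sub_one_mul_add hp.two_le hnv) a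
  have h2 : π ^ (p * n + 1) ∣ π ^ (p * n) * (e - a ^ p) := by
    rw [pow_succ]; exact mul_dvd_mul_left _ he
  obtain ⟨e', he'⟩ := exists_eq_mul_one_add_of_dvd_sub (hu.pow p) (c := π ^ (p * n + 1))
    (x := 1 + π ^ (p * n) * e) (by convert dvd_sub h2 h1 using 1; ring)
  exact ⟨_, e', hu, he'⟩

theorem exists_normal_form (hp : p.Prime) (hjac : π ∈ Ideal.jacobson ⊥) (hv : 0 < v)
    (hpd : π ^ ((p - 1) * v) ∣ (p : A)) {f : A}
    (hkey : ∀ g h m, IsUnit g → m < p * v → ¬ p ∣ m → f = g ^ p * (1 + π ^ m * h) → π ∣ h)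
    {m : ℕ} (hm : 0 < m) {g e : A} (hg : IsUnit g) (hf : f = g ^ p * (1 + π ^ m * e)) :
    ∃ (g h : A) (n : ℕ), IsUnit g ∧ 0 < n ∧ n ≤ v ∧ f = g ^ p * (1 + π ^ (p * n) * h) ∧
      (n = v ∨ ¬ ∃ c : A ⧸ Ideal.span {π}, c ^ p = Ideal.Quotient.mk (Ideal.span {π}) h) := by
  rcases le_or_gt (p * v) m with hmv | hmv
  · obtain ⟨k, rfl⟩ := Nat.exists_eq_add_of_le hmv
    exact ⟨g, π ^ k * e, v, hg, hv, le_rfl, by rw [hf, pow_add, mul_assoc], Or.inl rfl⟩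
  by_cases hπe : π ∣ e
  · obtain ⟨e', rfl⟩ := hπe
    exact exists_normal_form hp hjac hv hpd hkey (m := m + 1) (by omega) hg
      (by rw [hf, pow_succ, mul_assoc])
  obtain ⟨n, rfl⟩ : p ∣ m := by_contra fun hpm => hπe (hkey g e m hg hmv hpm hf)
  have hn : 0 < n := Nat.pos_of_mul_pos_left hm
  have hnv : n < v := Nat.lt_of_mul_lt_mul_left hmv
  by_cases hres : ∃ c : A ⧸ Ideal.span {π}, c ^ p = Ideal.Quotient.mk (Ideal.span {π}) e
  · obtain ⟨a, ha⟩ := exists_dvd_sub_pow_of_mk_eq_pow hres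
    obtain ⟨u, e', hu, hue⟩ := exists_pow_mul_one_add_pow_succ hp hjac hpd hn hnv ha
    exact exists_normal_form hp hjac hv hpd hkey (m := p * n + 1) (by omega) (hg.mul hu)
      (by rw [hf, hue, mul_pow, mul_assoc])
  · exact ⟨g, e, n, hg, hn, hnv.le, hf, Or.inr hres⟩
termination_by p * v - m

end NormalForm

theorem sub_one_mem_maximalIdeal_of_pow_eq_one {R : Type*} [CommRing R] [IsLocalRing R] {p : ℕ}
    [Fact p.Prime] [CharP (IsLocalRing.ResidueField R) p] {μ : R} (hμ : μ ^ p = 1) :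
    μ - 1 ∈ IsLocalRing.maximalIdeal R := by
  rw [← IsLocalRing.residue_eq_zero_iff]
  refine pow_eq_zero_iff (Fact.out : p.Prime).ne_zero |>.mp ?_
  rw [map_sub, map_one, sub_pow_char, ← map_pow, hμ, map_one, one_pow, sub_self]

theorem IsPrimitiveRoot.sub_one_pow_pred_dvd {R : Type*} [CommRing R] [IsDomain R] {p : ℕ}
    (hp : 0 < p) {μ : R} (hμ : IsPrimitiveRoot μ p) : (μ - 1) ^ (p - 1) ∣ (p : R) := by
  obtain ⟨z, -, hz⟩ := hμ.self_sub_one_pow_dvd_order (Nat.sub_lt hp one_pos)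
  exact ⟨z, by rw [hz, mul_comm]⟩

theorem pos_of_associated_pow_of_one_add_pow_eq_one {R : Type*} [CommRing R] [IsLocalRing R]
    {p : ℕ} [Fact p.Prime] [CharP (IsLocalRing.ResidueField R) p] {π lam : R} {v : ℕ}
    (hlam : (1 + lam) ^ p = 1) (hv : Associated (π ^ v) lam) : 0 < v := by
  refine Nat.pos_of_ne_zero fun h0 => (IsLocalRing.mem_maximalIdeal lam).mp ?_ ?_
  · simpa using sub_one_mem_maximalIdeal_of_pow_eq_one hlam
  · exact hv.isUnit_iff.mp (by simp [h0])

theorem pow_dvd_natCast_of_associated_pow {R : Type*} [CommRing R] [IsDomain R] {p : ℕ}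
    (hp : 0 < p) {π lam : R} {v : ℕ} (hlam : IsPrimitiveRoot (1 + lam) p)
    (hv : Associated (π ^ v) lam) : π ^ ((p - 1) * v) ∣ (p : R) := by
  rw [mul_comm, pow_mul]
  exact hv.pow_pow.dvd.trans (by simpa using hlam.sub_one_pow_pred_dvd hp)

theorem dvd_of_algebraMap_dvd_integralClosure {A : Type*} (K : Type*) {L : Type*} [CommRing A]
    [IsIntegrallyClosed A] [Field K] [Algebra A K] [IsFractionRing A K] [Field L] [Algebra A L]
    [Algebra K L] [IsScalarTower A K L] {a b : A}
    (h : algebraMap A (integralClosure A L) a ∣ algebraMap A (integralClosure A L) b) :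
    a ∣ b := by
  obtain ⟨c, hc⟩ := h
  have hcL : algebraMap A L b = algebraMap A L a * c := by simpa using congrArg Subtype.val hc
  have := FaithfulSMul.trans A K L
  have hinj := FaithfulSMul.algebraMap_injective A L
  rcases eq_or_ne a 0 with rfl | ha
  · exact ⟨0, hinj (by simpa using hcL)⟩
  have ha' : algebraMap A K a ≠ 0 := by rwa [Ne, IsFractionRing.to_map_eq_zero_iff]
  have hcK : algebraMap K L (algebraMap A K b / algebraMap A K a) = c := by
    rw [map_div₀, ← IsScalarTower.algebraMap_apply, ← IsScalarTower.algebraMap_apply, hcL,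
      mul_div_cancel_left₀ _ ((map_ne_zero_iff _ hinj).mpr ha)]
  have hint : IsIntegral A (algebraMap A K b / algebraMap A K a) := by
    rw [← isIntegral_algHom_iff (IsScalarTower.toAlgHom A K L) (algebraMap K L).injective]
    exact hcK ▸ c.2
  obtain ⟨k, hk⟩ := IsIntegrallyClosed.algebraMap_eq_of_integral hint
  exact ⟨k, IsFractionRing.injective A K (by rw [map_mul, hk, mul_div_cancel₀ _ ha'])⟩

theorem dvd_of_eq_pow_mul_one_add {A : Type*} (K : Type*) {L : Type*} [CommRing A]
    [IsIntegrallyClosed A] [Field K] [Algebra A K] [IsFractionRing A K] [Field L] [Algebra A L]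
    [Algebra K L] [IsScalarTower A K L] {p v m : ℕ} (hp : p.Prime) {π f g h : A} (hπ : π ≠ 0)
    (hB : (Ideal.span {algebraMap A (integralClosure A L) π}).IsPrime)
    (hpd : π ^ ((p - 1) * v) ∣ (p : A)) {θ : L} (hθ : θ ^ p = algebraMap A L f)
    (hg : IsUnit g) (hf : f = g ^ p * (1 + π ^ m * h)) (hmv : m < p * v) (hpm : ¬ p ∣ m) :
    π ∣ h := by
  have := FaithfulSMul.trans A K L
  set B := integralClosure A L
  have hπB : Prime (algebraMap A B π) := by
    refine (Ideal.span_singleton_prime fun h0 => hπ ?_).mp hB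
    exact FaithfulSMul.algebraMap_injective A L (by simpa using congrArg Subtype.val h0)
  set y : L := θ * algebraMap A L ↑hg.unit⁻¹
  have hy : y ^ p = algebraMap A L (1 + π ^ m * h) := by
    rw [mul_pow, hθ, ← map_pow, ← map_mul, hf, mul_right_comm, ← mul_pow, hg.mul_val_inv,
      one_pow, one_mul]
  have hyB : (⟨y, IsIntegral.of_pow hp.pos (hy ▸ isIntegral_algebraMap)⟩ : B) ^ p =
      1 + algebraMap A B π ^ m * algebraMap A B h :=
    Subtype.ext (by simpa using hy)
  refine dvd_of_algebraMap_dvd_integralClosure K (L := L) ?_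
  exact dvd_of_pow_eq_one_add_pow_mul hp hπB (by simpa using map_dvd (algebraMap A B) hpd) hyB
    hmv hpm

theorem stmt_10_general {p : ℕ} (hp : p.Prime)
    (R : Type*) [CommRing R] [IsDomain R] [IsDiscreteValuationRing R]
    [CharP (IsLocalRing.ResidueField R) p]
    (π : R) (hπ : Irreducible π)
    (ζ : FractionRing R) (hζ : IsPrimitiveRoot ζ p)
    (lam : R) (hlam : algebraMap R (FractionRing R) lam = ζ - 1)
    (vlam : ℕ) (hvlam : Associated (π ^ vlam) lam)
    (A : Type*) [CommRing A] [IsDomain A] [UniqueFactorizationMonoid A]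
    [Algebra R A] [Module.Flat R A]
    [IsAdicComplete (Ideal.span {algebraMap R A π}) A]
    [IsDomain (A ⧸ Ideal.span {algebraMap R A π})]
    (f : A) (hf : IsUnit f)
    (hirr : Irreducible ((Polynomial.X : Polynomial (FractionRing A)) ^ p -
      Polynomial.C (algebraMap A (FractionRing A) f)))
    (hBdom : IsDomain
      ((integralClosure A (AdjoinRoot ((Polynomial.X : Polynomial (FractionRing A)) ^ p -
          Polynomial.C (algebraMap A (FractionRing A) f)))) ⧸
        Ideal.span {algebraMap A
          (integralClosure A (AdjoinRoot ((Polynomial.X : Polynomial (FractionRing A)) ^ p -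
            Polynomial.C (algebraMap A (FractionRing A) f))))
          (algebraMap R A π)}))
    (hfbar : ∃ c : A ⧸ Ideal.span {algebraMap R A π},
      c ^ p = Ideal.Quotient.mk (Ideal.span {algebraMap R A π}) f) :
    ∃ (g h : A) (n : ℕ), IsUnit g ∧ 0 < n ∧ n ≤ vlam ∧
      f = g ^ p * (1 + (algebraMap R A π) ^ (p * n) * h) ∧
      (n = vlam ∨ ¬ ∃ c : A ⧸ Ideal.span {algebraMap R A π},
        c ^ p = Ideal.Quotient.mk (Ideal.span {algebraMap R A π}) h) := by
  have := Fact.mk hp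
  have hμ : IsPrimitiveRoot (1 + lam) p :=
    .of_map_of_injective (by simpa [hlam] using hζ) (IsFractionRing.injective R (FractionRing R))
  set πA := algebraMap R A π
  have hπA0 : πA ≠ 0 := by
    rw [show πA = π • (1 : A) from Algebra.algebraMap_eq_smul_one π]
    exact smul_ne_zero hπ.ne_zero one_ne_zero
  have hpdA : πA ^ ((p - 1) * vlam) ∣ (p : A) := by
    simpa using map_dvd (algebraMap R A) (pow_dvd_natCast_of_associated_pow hp.pos hμ hvlam)
  have := Fact.mk hirr
  have hkey : ∀ g h m, IsUnit g → m < p * vlam → ¬ p ∣ m → f = g ^ p * (1 + πA ^ m * h) →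
      πA ∣ h := fun g h m hg hmv hpm hfgh =>
    dvd_of_eq_pow_mul_one_add (FractionRing A) hp hπA0
      ((Ideal.Quotient.isDomain_iff_prime _).mp hBdom) hpdA
      (by rw [root_X_pow_sub_C_pow, ← AdjoinRoot.algebraMap_eq, ← IsScalarTower.algebraMap_apply])
      hg hfgh hmv hpm
  have hjac := IsAdicComplete.le_jacobson_bot (Ideal.span {πA})
  obtain ⟨g, e, hg, hfge⟩ := exists_pow_mul_one_add_of_mk_eq_pow hp.ne_zero hjac hf hfbar
  exact exists_normal_form hp (hjac (Ideal.mem_span_singleton_self _))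
    (pos_of_associated_pow_of_one_add_pow_eq_one hμ.pow_eq_one hvlam) hpdA hkey one_pos hg
    (by rwa [pow_one])

/-- additive/étale normal form: with `L = Frac(A)[X]/(X^p − f)` and `B` the
integral closure of `A` in `L`, if `B/πB` is a domain and the image of the unit `f` in
`A/πA` is a `p`-th power, then `f = g^p·(1 + π^{pn} h)` with `g` a unit, `0 < n ≤ v_K(λ)`,
and either `n = v_K(λ)` or the image of `h` in `A/πA` is not a `p`-th power. -/
theorem stmt_10 {p : ℕ} (hp : p.Prime)
    (R : Type*) [CommRing R] [IsDomain R] [IsDiscreteValuationRing R]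
    [IsAdicComplete (IsLocalRing.maximalIdeal R) R]
    [CharZero (FractionRing R)]
    [IsAlgClosed (IsLocalRing.ResidueField R)] [CharP (IsLocalRing.ResidueField R) p]
    (π : R) (hπ : Irreducible π)
    (ζ : FractionRing R) (hζ : IsPrimitiveRoot ζ p)
    (lam : R) (hlam : algebraMap R (FractionRing R) lam = ζ - 1)
    (vlam : ℕ) (hvlam : Associated (π ^ vlam) lam)
    (A : Type*) [CommRing A] [IsDomain A] [UniqueFactorizationMonoid A]
    [Algebra R A] [Module.Flat R A]
    [IsAdicComplete (Ideal.span {algebraMap R A π}) A]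
    [IsDomain (A ⧸ Ideal.span {algebraMap R A π})]
    (f : A) (hf : IsUnit f)
    (hirr : Irreducible ((Polynomial.X : Polynomial (FractionRing A)) ^ p -
      Polynomial.C (algebraMap A (FractionRing A) f)))
    (hBdom : IsDomain
      ((integralClosure A (AdjoinRoot ((Polynomial.X : Polynomial (FractionRing A)) ^ p -
          Polynomial.C (algebraMap A (FractionRing A) f)))) ⧸
        Ideal.span {algebraMap A
          (integralClosure A (AdjoinRoot ((Polynomial.X : Polynomial (FractionRing A)) ^ p -
            Polynomial.C (algebraMap A (FractionRing A) f))))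
          (algebraMap R A π)}))
    (hfbar : ∃ c : A ⧸ Ideal.span {algebraMap R A π},
      c ^ p = Ideal.Quotient.mk (Ideal.span {algebraMap R A π}) f) :
    ∃ (g h : A) (n : ℕ), IsUnit g ∧ 0 < n ∧ n ≤ vlam ∧
      f = g ^ p * (1 + (algebraMap R A π) ^ (p * n) * h) ∧
      (n = vlam ∨ ¬ ∃ c : A ⧸ Ideal.span {algebraMap R A π},
        c ^ p = Ideal.Quotient.mk (Ideal.span {algebraMap R A π}) h) :=
  stmt_10_general hp R π hπ ζ hζ lam hlam vlam hvlam A f hf hirr hBdom hfbar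
end

section
/- Let I be a finite set with at least 2 elements, (t_a)_{a in I} an injective family of elements of k, (m_a)_{a in I} a family of positive integers, N := sum_{a in I} m_a, and M := N + card(I) − 1; assume M < p. Let P be a polynomial over k with deg P = N and P(t_a) ≠ 0 for every a in I. Let û be the formal power series û := rev(P) · (prod_{a in I} (1 − t_a x)^{m_a})^{−1} in k[[x]] (the expansion at infinity, in the variable x = 1/X, of the rational function u = P / prod_{a in I}(X − t_a)^{m_a}). Then the formal derivative of û is nonzero and its x-adic order is at most N − 1, which is at most M − 2. (Hence the differential du cannot vanish to order M − 1 at infinity; this is the key step, in the structure theorem for order-p automorphisms of formal annuli with small conductors, showing that an additive fundamental vertex cannot have both of its fundamental edges with positive slope.) -/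
/-!
Put `Q = ∏ₐ (1 - tₐ x)^{mₐ}`, so that `Q û = rev P` with `Q` and `rev P` both of degree `≤ N`.
If the coefficients of `x¹, …, x^N` in `û` all vanished, comparing coefficients up to `x^N` would
give `rev P = û(0) · Q`. Injectivity and `|I| ≥ 2` give some `t_c ≠ 0`; then `Q` vanishes at
`1/t_c`, hence so does `rev P`, i.e. `P(t_c) = 0`, a contradiction. So `ûₙ ≠ 0` for some
`1 ≤ n ≤ N`, and since `n ≤ M < p`, the derivative has the nonzero coefficient `n ûₙ` at `x^{n-1}`.
-/

open Polynomial PowerSeries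

namespace Polynomial

section CommRing

variable {R I : Type*} [CommRing R] [Fintype I] (t : I → R) (m : I → ℕ)

theorem natDegree_prod_one_sub_C_mul_X_pow_le :
    (∏ a, (1 - C (t a) * X) ^ m a).natDegree ≤ ∑ a, m a := by
  refine (natDegree_prod_le _ _).trans (Finset.sum_le_sum fun a _ => ?_)
  have h : (1 - C (t a) * X).natDegree ≤ 1 := by compute_degree
  exact (natDegree_pow_le_of_le (m a) h).trans_eq (mul_one _)

theorem coeff_zero_prod_one_sub_C_mul_X_pow : (∏ a, (1 - C (t a) * X) ^ m a).coeff 0 = 1 := by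
  simp [coeff_zero_eq_eval_zero, eval_prod]

end CommRing

theorem eval_inv_prod_one_sub_C_mul_X_pow_eq_zero {K I : Type*} [Field K] [Fintype I]
    {t : I → K} {m : I → ℕ} {c : I} (hc : t c ≠ 0) (hm : m c ≠ 0) :
    (∏ a, (1 - C (t a) * X) ^ m a).eval (t c)⁻¹ = 0 := by
  rw [eval_prod]
  exact Finset.prod_eq_zero (Finset.mem_univ c) (by simp [hc, hm])

theorem eq_C_mul_of_coe_mul_eq {R : Type*} [CommSemiring R] {Q F : R[X]} {u : R⟦X⟧} {N : ℕ}
    (hQ : Q.natDegree ≤ N) (hF : F.natDegree ≤ N) (hu : ∀ n < N, PowerSeries.coeff (n + 1) u = 0)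
    (h : (Q : R⟦X⟧) * u = F) :
    F = C (PowerSeries.constantCoeff u) * Q := by
  ext n
  rcases le_or_gt n N with hn | hn
  · rw [coeff_C_mul, ← coeff_coe F, ← h, PowerSeries.coeff_mul, Finset.sum_eq_single (n, 0),
      coeff_coe, coeff_zero_eq_constantCoeff_apply, mul_comm]
    · rintro ⟨i, j⟩ hij hne
      rw [Finset.HasAntidiagonal.mem_antidiagonal] at hij
      have hj : j ≠ 0 := by rintro rfl; simp_all
      rw [← Nat.sub_add_cancel (Nat.one_le_iff_ne_zero.mpr hj), hu _ (by omega), mul_zero]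
    · simp
  · rw [coeff_C_mul, coeff_eq_zero_of_natDegree_lt (hF.trans_lt hn),
      coeff_eq_zero_of_natDegree_lt (hQ.trans_lt hn), mul_zero]

theorem exists_coeff_succ_reverse_mul_inv_prod_ne_zero {K I : Type*} [Field K] [Fintype I]
    [Nontrivial I] {t : I → K} (ht : Function.Injective t) {m : I → ℕ} (hm : ∀ a, 0 < m a)
    {P : K[X]} (hP : P.natDegree ≤ ∑ a, m a) (hPt : ∀ a, P.eval (t a) ≠ 0) :
    ∃ n < ∑ a, m a, PowerSeries.coeff (n + 1)
      ((P.reverse : K⟦X⟧) * ((∏ a, (1 - C (t a) * X) ^ m a : K[X]) : K⟦X⟧)⁻¹) ≠ 0 := by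
  set Q : K[X] := ∏ a, (1 - C (t a) * X) ^ m a
  by_contra! hu
  have hQu : (Q : K⟦X⟧) * ((P.reverse : K⟦X⟧) * (Q : K⟦X⟧)⁻¹) = P.reverse := by
    rw [mul_left_comm, PowerSeries.mul_inv_cancel _ (by
      rw [constantCoeff_coe, coeff_zero_prod_one_sub_C_mul_X_pow]; exact one_ne_zero), mul_one]
  have hrev := eq_C_mul_of_coe_mul_eq (natDegree_prod_one_sub_C_mul_X_pow_le t m)
    ((reverse_natDegree_le P).trans hP) hu hQu
  obtain ⟨c, hc⟩ := ht.exists_ne 0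
  have : Invertible (t c) := invertibleOfNonzero hc
  apply hPt c
  rw [← eval₂_id, ← eval₂_reverse_eq_zero_iff, hrev, invOf_eq_inv, eval₂_id, eval_mul,
    eval_inv_prod_one_sub_C_mul_X_pow_eq_zero hc (hm c).ne', mul_zero]

end Polynomial

theorem PowerSeries.coeff_derivative_ne_zero {R : Type*} [CommSemiring R] [NoZeroDivisors R]
    {f : R⟦X⟧} {n : ℕ} (hf : coeff (n + 1) f ≠ 0) (hn : ((n + 1 : ℕ) : R) ≠ 0) :
    coeff n (d⁄dX R f) ≠ 0 := by
  rw [coeff_derivative]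
  exact mul_ne_zero hf (by exact_mod_cast hn)

theorem stmt_11_general {p : ℕ} (k : Type*) [Field k] [CharP k p]
    (I : Type*) [Fintype I] (hI : 2 ≤ Fintype.card I)
    (t : I → k) (htinj : Function.Injective t)
    (m' : I → ℕ) (hm' : ∀ a, 0 < m' a)
    (N M : ℕ) (hN : N = ∑ a, m' a) (hM : M = N + Fintype.card I - 1) (hMp : M < p)
    (P : Polynomial k) (hdeg : P.degree = (N : ℕ)) (hPt : ∀ a, P.eval (t a) ≠ 0) :
    PowerSeries.derivativeFun
        ((P.reverse : PowerSeries k) *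
          (((∏ a, (1 - Polynomial.C (t a) * Polynomial.X) ^ m' a : Polynomial k) :
            PowerSeries k))⁻¹) ≠ 0 ∧
      PowerSeries.order (PowerSeries.derivativeFun
        ((P.reverse : PowerSeries k) *
          (((∏ a, (1 - Polynomial.C (t a) * Polynomial.X) ^ m' a : Polynomial k) :
            PowerSeries k))⁻¹)) ≤ (N - 1 : ℕ) ∧
      N - 1 ≤ M - 2 := by
  subst hN
  have hcard : Fintype.card I ≤ ∑ a, m' a := by
    rw [Fintype.card_eq_sum_ones]
    exact Finset.sum_le_sum fun a _ => hm' a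
  have : Nontrivial I := Fintype.one_lt_card_iff_nontrivial.mp hI
  obtain ⟨n, hnN, hn⟩ := exists_coeff_succ_reverse_mul_inv_prod_ne_zero htinj hm'
    (natDegree_eq_of_degree_eq_some hdeg).le hPt
  have hnp : ((n + 1 : ℕ) : k) ≠ 0 := by
    rw [Ne, CharP.cast_eq_zero_iff k p]
    exact Nat.not_dvd_of_pos_of_lt n.succ_pos (by omega)
  have hd : coeff n (derivativeFun (R := k) _) ≠ 0 := coeff_derivative_ne_zero hn hnp
  exact ⟨fun h => hd (by rw [h, map_zero]), (order_le n hd).trans (by exact_mod_cast (by omega)),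
    by omega⟩

/-- with `û = rev(P)·(∏_a (1 − t_a x)^{m_a})⁻¹ ∈ k[[x]]` (the expansion at
infinity of `u = P/∏_a (X − t_a)^{m_a}`), the formal derivative of `û` is nonzero and its
`x`-adic order is at most `N − 1 ≤ M − 2`. -/
theorem stmt_11 {p : ℕ} (hp : p.Prime) (k : Type*) [Field k] [CharP k p]
    (I : Type*) [Fintype I] (hI : 2 ≤ Fintype.card I)
    (t : I → k) (htinj : Function.Injective t)
    (m' : I → ℕ) (hm' : ∀ a, 0 < m' a)
    (N M : ℕ) (hN : N = ∑ a, m' a) (hM : M = N + Fintype.card I - 1) (hMp : M < p)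
    (P : Polynomial k) (hdeg : P.degree = (N : ℕ)) (hPt : ∀ a, P.eval (t a) ≠ 0) :
    PowerSeries.derivativeFun
        ((P.reverse : PowerSeries k) *
          (((∏ a, (1 - Polynomial.C (t a) * Polynomial.X) ^ m' a : Polynomial k) :
            PowerSeries k))⁻¹) ≠ 0 ∧
      PowerSeries.order (PowerSeries.derivativeFun
        ((P.reverse : PowerSeries k) *
          (((∏ a, (1 - Polynomial.C (t a) * Polynomial.X) ^ m' a : Polynomial k) :
            PowerSeries k))⁻¹)) ≤ (N - 1 : ℕ) ∧
      N - 1 ≤ M - 2 :=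
  stmt_11_general k I hI t htinj m' hm' N M hN hM hMp P hdeg hPt
end
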